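/- Let d_{2a+1,j} = 2(−1)^{a+j+1}(a!)²/((a+j)!(a−j)!j²) for 1 ≤ |j| ≤ a and d_{2a+1,0} = −∑_{j≠0} d_{2a+1,j}. Then ∑_{j=−a}^{a} |d_{2a+1,j}| < 4π²/3, and consequently the discrete kinetic operator T̃ = −(1/(2m h²)) ∑_{j=−a, j≠0}^{a} d_{2a+1,j} A_j (where each A_j is unitary) has operator norm at most π²/(3 m h²). -/

import Mathlib

/-! Writing `(a!)² / ((a+j)! (a-j)!) = C(2a, a+j) / C(2a, a) ≤ 1` gives `|d_{2a+1,j}| ≤ 2 / j²`, so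
the off-diagonal coefficients sum to at most `2 ∑_{j ≠ 0} 1/j² = 2π²/3`, strictly since only finitely
many terms occur. The diagonal coefficient is bounded by the same sum, and the operator bound is the
triangle inequality with `‖A_j‖ ≤ 1`. -/

open Real Finset

noncomputable def dcoefNZ (a j : ℤ) : ℝ :=
  2 * (-1 : ℝ) ^ (a + j + 1) * ((Nat.factorial a.toNat : ℝ))^2 /
    ((Nat.factorial (a + j).toNat : ℝ) * (Nat.factorial (a - j).toNat : ℝ) * (j : ℝ)^2)

noncomputable def dcoefFull (a j : ℤ) : ℝ :=
  if j = 0 then -∑ i ∈ (Finset.Icc (-a) a).erase 0, dcoefNZ a i else dcoefNZ a j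

open Nat

theorem Nat.factorial_mul_factorial_le_of_add_eq {n p q : ℕ} (h : p + q = 2 * n) :
    n ! * n ! ≤ p ! * q ! := by
  have hpq := Nat.add_choose_mul_factorial_mul_factorial p q
  have hnn := Nat.add_choose_mul_factorial_mul_factorial n n
  have hchoose : (p + q).choose q ≤ (n + n).choose n := by
    rw [h, ← two_mul, ← Nat.centralBinom_eq_two_mul_choose]
    exact Nat.choose_le_centralBinom q n
  refine Nat.le_of_mul_le_mul_left ?_ (Nat.choose_pos (Nat.le_add_left n n))
  calc (n + n).choose n * (n ! * n !) = (p + q).choose q * (p ! * q !) := by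
        rw [← mul_assoc, ← mul_assoc, hnn, hpq, h, two_mul]
    _ ≤ (n + n).choose n * (p ! * q !) := Nat.mul_le_mul_right _ hchoose

theorem abs_dcoefNZ_le {a j : ℤ} (hj : j ∈ Icc (-a) a) : |dcoefNZ a j| ≤ 2 / (j : ℝ) ^ 2 := by
  rw [mem_Icc] at hj
  have hfac : ((a.toNat)! : ℝ) ^ 2 ≤ ((a + j).toNat)! * ((a - j).toNat)! := by
    rw [sq]
    exact_mod_cast Nat.factorial_mul_factorial_le_of_add_eq (by omega)
  have hratio : ((a.toNat)! : ℝ) ^ 2 / (((a + j).toNat)! * ((a - j).toNat)!) ≤ 1 :=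
    div_le_one_of_le₀ hfac (by positivity)
  calc |dcoefNZ a j|
      = 2 / (j : ℝ) ^ 2 * (((a.toNat)! : ℝ) ^ 2 / (((a + j).toNat)! * ((a - j).toNat)!)) := by
        simp only [dcoefNZ, abs_div, abs_mul, abs_neg_one_zpow, abs_two, Nat.abs_cast, abs_pow,
          sq_abs]
        ring
    _ ≤ 2 / (j : ℝ) ^ 2 := mul_le_of_le_one_right (by positivity) hratio

-- The `j = 0` term is `1 / 0 = 0`.
theorem hasSum_one_div_int_sq : HasSum (fun j : ℤ ↦ 1 / (j : ℝ) ^ 2) (π ^ 2 / 3) := by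
  have hpos : HasSum (fun n : ℕ ↦ 1 / ((n : ℤ) : ℝ) ^ 2) (π ^ 2 / 6) := by
    simpa only [Int.cast_natCast] using hasSum_zeta_two
  have hneg : HasSum (fun n : ℕ ↦ 1 / ((-n : ℤ) : ℝ) ^ 2) (π ^ 2 / 6) := by
    simpa only [Int.cast_neg, Int.cast_natCast, neg_sq] using hasSum_zeta_two
  have hval : π ^ 2 / 6 + π ^ 2 / 6 - 1 / ((0 : ℤ) : ℝ) ^ 2 = π ^ 2 / 3 := by
    rw [Int.cast_zero, zero_pow two_ne_zero, div_zero]; ring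
  exact hval ▸ HasSum.of_nat_of_neg (f := fun j : ℤ ↦ 1 / (j : ℝ) ^ 2) hpos hneg

theorem sum_one_div_int_sq_lt (s : Finset ℤ) : ∑ j ∈ s, 1 / (j : ℝ) ^ 2 < π ^ 2 / 3 := by
  obtain ⟨k, hk⟩ := Infinite.exists_notMem_finset (insert 0 s)
  have hk0 : k ≠ 0 := fun h ↦ hk (h ▸ mem_insert_self 0 s)
  have hks : k ∉ s := fun h ↦ hk (mem_insert_of_mem h)
  calc ∑ j ∈ s, 1 / (j : ℝ) ^ 2 < 1 / (k : ℝ) ^ 2 + ∑ j ∈ s, 1 / (j : ℝ) ^ 2 :=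
        lt_add_of_pos_left _ (by positivity)
    _ = ∑ j ∈ insert k s, 1 / (j : ℝ) ^ 2 := by rw [sum_insert hks]
    _ ≤ π ^ 2 / 3 := sum_le_hasSum _ (fun _ _ ↦ by positivity) hasSum_one_div_int_sq

theorem sum_abs_dcoefNZ_lt (a : ℤ) :
    ∑ j ∈ (Icc (-a) a).erase 0, |dcoefNZ a j| < 2 * π ^ 2 / 3 :=
  calc ∑ j ∈ (Icc (-a) a).erase 0, |dcoefNZ a j|
      ≤ ∑ j ∈ (Icc (-a) a).erase 0, 2 * (1 / (j : ℝ) ^ 2) :=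
        sum_le_sum fun j hj ↦ by
          rw [← div_eq_mul_one_div]; exact abs_dcoefNZ_le (mem_of_mem_erase hj)
    _ = 2 * ∑ j ∈ (Icc (-a) a).erase 0, 1 / (j : ℝ) ^ 2 := (mul_sum ..).symm
    _ < 2 * (π ^ 2 / 3) := by gcongr; exact sum_one_div_int_sq_lt _
    _ = 2 * π ^ 2 / 3 := by ring

theorem norm_sum_smul_le_sum_norm {ι 𝕜 E : Type*} [NormedField 𝕜] [SeminormedAddCommGroup E]
    [NormedSpace 𝕜 E] (s : Finset ι) (c : ι → 𝕜) {x : ι → E} (hx : ∀ i ∈ s, ‖x i‖ ≤ 1) :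
    ‖∑ i ∈ s, c i • x i‖ ≤ ∑ i ∈ s, ‖c i‖ :=
  (norm_sum_le _ _).trans <| sum_le_sum fun i hi ↦ by
    rw [norm_smul]; exact mul_le_of_le_one_right (norm_nonneg _) (hx i hi)

theorem sum_abs_dcoefFull_le (a : ℤ) :
    ∑ j ∈ Icc (-a) a, |dcoefFull a j| ≤ 2 * ∑ j ∈ (Icc (-a) a).erase 0, |dcoefNZ a j| := by
  have hoff : ∑ j ∈ (Icc (-a) a).erase 0, |dcoefFull a j| =
      ∑ j ∈ (Icc (-a) a).erase 0, |dcoefNZ a j| :=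
    sum_congr rfl fun j hj ↦ by rw [dcoefFull, if_neg (ne_of_mem_erase hj)]
  have hdiag : |dcoefFull a 0| ≤ ∑ j ∈ (Icc (-a) a).erase 0, |dcoefNZ a j| := by
    rw [dcoefFull, if_pos rfl, abs_neg]
    exact abs_sum_le_sum_abs _ _
  calc ∑ j ∈ Icc (-a) a, |dcoefFull a j|
      ≤ ∑ j ∈ insert 0 ((Icc (-a) a).erase 0), |dcoefFull a j| :=
        sum_le_sum_of_subset_of_nonneg (insert_erase_subset _ _) fun _ _ _ ↦ abs_nonneg _
    _ = |dcoefFull a 0| + ∑ j ∈ (Icc (-a) a).erase 0, |dcoefFull a j| :=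
        sum_insert (notMem_erase _ _)
    _ ≤ 2 * ∑ j ∈ (Icc (-a) a).erase 0, |dcoefNZ a j| := by rw [hoff]; linarith

theorem kinetic_operator_norm_bound_general {E : Type*} [NormedAddCommGroup E]
    [InnerProductSpace ℂ E]
    (a : ℤ) (m h : ℝ) (hm : 0 < m)
    (A : ℤ → E →L[ℂ] E) (hA : ∀ j : ℤ, ∀ v : E, ‖A j v‖ = ‖v‖) :
    (∑ j ∈ Finset.Icc (-a) a, |dcoefFull a j|) < 4 * π ^ 2 / 3 ∧
    ‖(-(1 / (2 * m * h ^ 2)) : ℂ) •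
        ∑ j ∈ (Finset.Icc (-a) a).erase 0, ((dcoefNZ a j : ℝ) : ℂ) • A j‖ ≤
      π ^ 2 / (3 * m * h ^ 2) := by
  have hS := sum_abs_dcoefNZ_lt a
  refine ⟨by linarith [sum_abs_dcoefFull_le a], ?_⟩
  have hA_le : ∀ j ∈ (Icc (-a) a).erase 0, ‖A j‖ ≤ 1 := fun j _ ↦
    (A j).opNorm_le_bound zero_le_one fun v ↦ by rw [hA, one_mul]
  have hscalar : ‖(-(1 / (2 * m * h ^ 2)) : ℂ)‖ = 1 / (2 * m * h ^ 2) := by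
    have hreal : (1 / (2 * m * h ^ 2) : ℂ) = ((1 / (2 * m * h ^ 2) : ℝ) : ℂ) := by push_cast; rfl
    rw [norm_neg, hreal, Complex.norm_real, Real.norm_of_nonneg (by positivity)]
  have hsum := norm_sum_smul_le_sum_norm _ (fun j ↦ ((dcoefNZ a j : ℝ) : ℂ)) hA_le
  simp only [Complex.norm_real, Real.norm_eq_abs] at hsum
  rw [norm_smul, hscalar]
  calc 1 / (2 * m * h ^ 2) * ‖∑ j ∈ (Icc (-a) a).erase 0, ((dcoefNZ a j : ℝ) : ℂ) • A j‖
      ≤ 1 / (2 * m * h ^ 2) * (2 * π ^ 2 / 3) := by gcongr; exact hsum.trans hS.le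
    _ = π ^ 2 / (3 * m * h ^ 2) := by ring

theorem kinetic_operator_norm_bound {E : Type*} [NormedAddCommGroup E]
    [InnerProductSpace ℂ E] [FiniteDimensional ℂ E]
    (a : ℤ) (ha : 1 ≤ a) (m h : ℝ) (hm : 0 < m) (hh : 0 < h)
    (A : ℤ → E →L[ℂ] E) (hA : ∀ j : ℤ, ∀ v : E, ‖A j v‖ = ‖v‖) :
    (∑ j ∈ Finset.Icc (-a) a, |dcoefFull a j|) < 4 * π ^ 2 / 3 ∧
    ‖(-(1 / (2 * m * h ^ 2)) : ℂ) •
        ∑ j ∈ (Finset.Icc (-a) a).erase 0, ((dcoefNZ a j : ℝ) : ℂ) • A j‖ ≤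
      π ^ 2 / (3 * m * h ^ 2) :=
  kinetic_operator_norm_bound_general a m h hm A hA
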